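/- Let A be the divisibility constraint x_j | y_k and let TA_A be its gadget sketch. For all assignments X : {x₁,…,xₙ} → ℕ and Y : {y₁,…,y_m} → ℕ, the following are equivalent: (1) X(x_j) divides Y(y_k); (2) there exists a simple configuration C of TA_A[X] with C(start_A) > 0 and C(t_i) = Y(y_i) for all 1 ≤ i ≤ m, from which end_A can be covered. -/
import Mathlib


namespace ThresholdAutomata

/-- A configuration of the gadget sketch `TA_A` for the divisibility atom
`A = x_j | y_k` (after substituting values for the indeterminates).
Locations are `0 = start_A`, `1 = ℓ_A`, `2 = end_A`; `v` is the single shared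
variable `v_A`; the environment variables are `t₁, …, t_m`, `d_A` and `z`,
where `z` is the total number of processes (the number function is `N = z`). -/
structure Config (m : ℕ) where
  κ : Fin 3 → ℕ
  v : ℕ
  t : Fin m → ℕ
  d : ℕ
  z : ℕ

/-- Moving one process from location `p` to location `q`. -/
def move {α : Type*} [DecidableEq α] (κ : α → ℕ) (p q : α) : α → ℕ :=
  Function.update (Function.update κ p (κ p - 1)) q (κ q + 1)

/-- The step relation of `TA_A[X]` for the divisibility atom `A = x_j | y_k`:
two unguarded rules from `start_A` to `ℓ_A` (one incrementing `v_A`, one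
incrementing nothing), and one non-incrementing rule from `ℓ_A` to `end_A`
with guard `v_A = s_j · d_A ∧ v_A = t_k` (where `s_j` has the value `X j`). -/
inductive Step {n m : ℕ} (X : Fin n → ℕ) (j : Fin n) (k : Fin m) :
    Config m → Config m → Prop
  | inc (C : Config m) (h : 0 < C.κ 0) :
      Step X j k C ⟨move C.κ 0 1, C.v + 1, C.t, C.d, C.z⟩
  | skip (C : Config m) (h : 0 < C.κ 0) :
      Step X j k C ⟨move C.κ 0 1, C.v, C.t, C.d, C.z⟩
  | fin (C : Config m) (h : 0 < C.κ 1)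
      (hg₁ : C.v = X j * C.d) (hg₂ : C.v = C.t k) :
      Step X j k C ⟨move C.κ 1 2, C.v, C.t, C.d, C.z⟩

/-- `C` is a configuration: the total number of processes is `z`. -/
def Config.valid {m : ℕ} (C : Config m) : Prop :=
  C.κ 0 + C.κ 1 + C.κ 2 = C.z

/-- A simple configuration: all processes are in exactly one location
and the shared variable has value `0`. -/
def Simple {m : ℕ} (C : Config m) : Prop :=
  C.valid ∧ C.v = 0 ∧
  ∃ ℓ : Fin 3, 0 < C.κ ℓ ∧ ∀ ℓ' : Fin 3, ℓ' ≠ ℓ → C.κ ℓ' = 0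

/-- `C` can cover `end_A` in `TA_A[X]`. -/
def CoversEnd {n m : ℕ} (X : Fin n → ℕ) (j : Fin n) (k : Fin m)
    (C : Config m) : Prop :=
  ∃ C' : Config m, Relation.ReflTransGen (Step X j k) C C' ∧ 0 < C'.κ 2

/-- **Lemma 1, divisibility case**: for the atom `A = x_j | y_k` and all
assignments `X`, `Y` over `ℕ`, `A(X,Y)` is true iff there is a simple
configuration `C` of `TA_A[X]` with `C(start_A) > 0` and `C(tᵢ) = Y(yᵢ)` for all
`i` from which `end_A` can be covered. -/
theorem divisibility_gadget_correct (n m : ℕ) (j : Fin n) (k : Fin m)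
    (X : Fin n → ℕ) (Y : Fin m → ℕ) :
    X j ∣ Y k ↔
      ∃ C : Config m, Simple C ∧ 0 < C.κ 0 ∧ (∀ i, C.t i = Y i) ∧
        CoversEnd X j k C := by
  constructor
  · rintro ⟨d, hd⟩
    set a := Y k with ha
    refine ⟨⟨![a + 1, 0, 0], 0, Y, d, a + 1⟩, ?_, by simp, fun i => rfl, ?_⟩
    · refine ⟨by simp [Config.valid], rfl, 0, by simp, ?_⟩
      intro ℓ' hℓ'
      fin_cases ℓ' <;> simp_all
    · -- do `a` incs, one skip, then fin
      have key : ∀ i : ℕ, i ≤ a →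
          Relation.ReflTransGen (Step X j k)
            ⟨![a + 1, 0, 0], 0, Y, d, a + 1⟩
            ⟨![a + 1 - i, i, 0], i, Y, d, a + 1⟩ := by
        intro i hi
        induction i with
        | zero => exact Relation.ReflTransGen.refl
        | succ i ih =>
          refine (ih (Nat.le_of_succ_le hi)).tail ?_
          have h1 : (![a + 1 - i, i, 0] : Fin 3 → ℕ) 0 = a + 1 - i := rfl
          have hpos : 0 < a + 1 - i := by omega
          have := Step.inc (X := X) (j := j) (k := k)
            ⟨![a + 1 - i, i, 0], i, Y, d, a + 1⟩ (by simp only [h1]; omega)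
          convert this using 2
          funext ℓ
          fin_cases ℓ <;> simp [move, Function.update] <;> omega
      have step2 : Relation.ReflTransGen (Step X j k)
          ⟨![a + 1, 0, 0], 0, Y, d, a + 1⟩
          ⟨![0, a + 1, 0], a, Y, d, a + 1⟩ := by
        refine (key a le_rfl).tail ?_
        have := Step.skip (X := X) (j := j) (k := k)
          ⟨![a + 1 - a, a, 0], a, Y, d, a + 1⟩
          (by simp [show a + 1 - a = 1 by omega])
        convert this using 2
        funext ℓ
        fin_cases ℓ <;> simp [move, Function.update] <;> omega
      refine ⟨⟨move ![0, a + 1, 0] 1 2, a, Y, d, a + 1⟩,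
        step2.tail (Step.fin _ (by simp) (by simpa using hd) rfl), ?_⟩
      simp [move, Function.update]
  · rintro ⟨C, ⟨_, _, ℓ, hℓpos, hℓ⟩, h0, ht, C', hreach, h2⟩
    -- invariant: κ 2 = 0 ∨ X j ∣ t k, and t is constant
    have inv : ∀ D : Config m, Relation.ReflTransGen (Step X j k) C D →
        D.t = C.t ∧ (D.κ 2 = 0 ∨ X j ∣ D.t k) := by
      intro D hD
      induction hD with
      | refl =>
        refine ⟨rfl, Or.inl ?_⟩
        have hℓ0 : ℓ = 0 := by
          by_contra h
          exact absurd (hℓ 0 (by simpa using Ne.symm (by simpa using h))) (by omega)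
        exact hℓ 2 (by simp [hℓ0])
      | tail hab hbc ih =>
        obtain ⟨iht, ihd⟩ := ih
        cases hbc with
        | inc h =>
          refine ⟨iht, ?_⟩
          rcases ihd with h2 | h2
          · exact Or.inl (by simpa [move, Function.update] using h2)
          · exact Or.inr h2
        | skip h =>
          refine ⟨iht, ?_⟩
          rcases ihd with h2 | h2
          · exact Or.inl (by simpa [move, Function.update] using h2)
          · exact Or.inr h2
        | fin h hg₁ hg₂ =>
          exact ⟨iht, Or.inr ⟨_, by rw [← hg₂, hg₁]⟩⟩
    obtain ⟨htC, hd⟩ := inv C' hreach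
    rcases hd with h | h
    · omega
    · rw [htC, ht k] at h
      exact h

end ThresholdAutomata
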